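/- arXiv:0901.1298 — 2 statements merged into one kernel-verified Lean document; each statement's English description precedes it below -/
import Mathlib

section
/- Let n ≥ 4 and let D_n denote the tree on n vertices obtained from a path on n−1 vertices by attaching one extra leaf to the second vertex of the path. Then the Alexander polynomial of D_n equals Δ(D_n)(t) = 1 − t + (−1)^{n−1} t^{n−1} + (−1)^n t^n in ℤ[t]. -/
open Polynomial Matrix

attribute [local instance] Classical.propDecidable

namespace Seifert

variable {V : Type} [Fintype V]

/-- A matching of a graph `G`: a finite set of edges of `G` that are pairwise disjoint. -/
def IsMatching (G : SimpleGraph V) (R : Finset (Sym2 V)) : Prop :=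
  (∀ e ∈ R, e ∈ G.edgeSet) ∧
    ∀ e ∈ R, ∀ f ∈ R, e ≠ f → ∀ v : V, v ∈ e → v ∉ f

/-- A perfect matching: a matching covering every vertex. -/
def IsPerfectMatching (G : SimpleGraph V) (R : Finset (Sym2 V)) : Prop :=
  IsMatching G R ∧ ∀ v : V, ∃ e ∈ R, v ∈ e

/-- A configuration on `G`: a matching (the set of red edges) together with an assignment
of a sign (`true` = plus, `false` = minus) to every vertex not covered by a red edge;
vertices covered by a red edge get `none`. -/
structure Config (G : SimpleGraph V) where
  red : Finset (Sym2 V)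
  matching : IsMatching G red
  sign : V → Option Bool
  sign_none : ∀ v : V, sign v = none ↔ ∃ e ∈ red, v ∈ e

instance (G : SimpleGraph V) : Finite (Config G) :=
  Finite.of_injective (fun C => (C.red, C.sign)) (by
    rintro ⟨r, hr, s, hs⟩ ⟨r', hr', s', hs'⟩ h
    simp only [Prod.mk.injEq] at h
    obtain ⟨h1, h2⟩ := h
    subst h1; subst h2; rfl)

noncomputable instance (G : SimpleGraph V) : Fintype (Config G) := Fintype.ofFinite _

/-- The grading `Q`: the number of minuses. -/
noncomputable def Qg {G : SimpleGraph V} (C : Config G) : ℕ :=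
  (Finset.univ.filter fun v : V => C.sign v = some false).card

/-- The grading `E`: the number of minuses plus the number of red edges. -/
noncomputable def Eg {G : SimpleGraph V} (C : Config G) : ℕ := Qg C + C.red.card

/-- `DStep C C'` holds iff `C'` is one of the summands of `D(C)`: it is obtained from `C`
by deleting one red edge `e` and assigning a plus to one endpoint of `e` and a minus to
the other. -/
def DStep {G : SimpleGraph V} (C C' : Config G) : Prop :=
  ∃ e ∈ C.red, C'.red = C.red.erase e ∧
    (∀ x : V, x ∉ e → C'.sign x = C.sign x) ∧
    ∃ u v : V, e = s(u, v) ∧ C'.sign u = some true ∧ C'.sign v = some false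

/-- `dStep C C'` holds iff `C'` is one of the summands of `d(C)`: it is obtained from `C`
by changing the sign of one vertex from plus to minus. -/
def dStep {G : SimpleGraph V} (C C' : Config G) : Prop :=
  C'.red = C.red ∧ ∃ w : V, C.sign w = some true ∧ C'.sign w = some false ∧
    ∀ x : V, x ≠ w → C'.sign x = C.sign x

/-- The linear map on spaces of `F₂`-valued functions induced by a relation `r`:
the basis vector of `a` is sent to the sum of the basis vectors of all `b` with `r a b`. -/
noncomputable def sumLin {α β : Type} [Fintype α] (r : α → β → Prop) :
    (α → ZMod 2) →ₗ[ZMod 2] (β → ZMod 2) where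
  toFun f b := ∑ a : α, if r a b then f a else 0
  map_add' f g := by
    funext b
    simp only [Pi.add_apply]
    rw [← Finset.sum_add_distrib]
    exact Finset.sum_congr rfl fun a _ => by by_cases h : r a b <;> simp [h]
  map_smul' c f := by
    funext b
    simp only [RingHom.id_apply, Pi.smul_apply, smul_eq_mul, Finset.mul_sum]
    exact Finset.sum_congr rfl fun a _ => by by_cases h : r a b <;> simp [h]

/-- The differential `D` on the total Seifert complex `SC(T)`. -/
noncomputable def Dmap (G : SimpleGraph V) :
    (Config G → ZMod 2) →ₗ[ZMod 2] (Config G → ZMod 2) :=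
  sumLin DStep

/-- The differential `d` on the total Seifert complex `SC(T)`. -/
noncomputable def dmap (G : SimpleGraph V) :
    (Config G → ZMod 2) →ₗ[ZMod 2] (Config G → ZMod 2) :=
  sumLin dStep

/-- The graded piece `SC^k(T,n)`: the `F₂`-vector space with basis the configurations
with `Q = k` and `E = n`. -/
abbrev SC (G : SimpleGraph V) (k n : ℤ) : Type :=
  {C : Config G // (Qg C : ℤ) = k ∧ (Eg C : ℤ) = n} → ZMod 2

/-- The differential `D` between graded pieces. (Mathematically it is nonzero only
from `SC^k(T,n)` to `SC^{k+1}(T,n)`.) -/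
noncomputable def Dgr (G : SimpleGraph V) (k n k' n' : ℤ) :
    SC G k n →ₗ[ZMod 2] SC G k' n' :=
  sumLin fun C C' => DStep C.1 C'.1

/-- The dimension of the cohomology `ker g / im f` at the middle term of `A —f→ B —g→ C`
(taking the image of `f` intersected with the kernel of `g`). -/
noncomputable def cohDim {A B M : Type} [AddCommGroup A] [AddCommGroup B] [AddCommGroup M]
    [Module (ZMod 2) A] [Module (ZMod 2) B] [Module (ZMod 2) M]
    (f : A →ₗ[ZMod 2] B) (g : B →ₗ[ZMod 2] M) : ℕ :=
  Module.finrank (ZMod 2)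
    (LinearMap.ker g ⧸ (LinearMap.range f).comap (LinearMap.ker g).subtype)

/-- The dimension of the Seifert cohomology `SH^k(T,n)`. -/
noncomputable def SHdim (G : SimpleGraph V) (k n : ℤ) : ℕ :=
  cohDim (Dgr G (k - 1) n k n) (Dgr G k n (k + 1) n)

/-- The Seifert matrix of a graph with respect to an enumeration of its vertices. -/
noncomputable def seifertMatrix (G : SimpleGraph V) {m : ℕ} (e : V ≃ Fin m) :
    Matrix (Fin m) (Fin m) ℤ := fun i j =>
  if i = j then -1 else if i < j ∧ G.Adj (e.symm i) (e.symm j) then 1 else 0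

/-- The Alexander polynomial `det (t S - Sᵀ)` of a graph with respect to an enumeration
of its vertices. -/
noncomputable def alexDet (G : SimpleGraph V) {m : ℕ} (e : V ≃ Fin m) : Polynomial ℤ :=
  let S : Matrix (Fin m) (Fin m) (Polynomial ℤ) :=
    (seifertMatrix G e).map fun a => (Polynomial.C a : Polynomial ℤ)
  ((X : Polynomial ℤ) • S - Sᵀ).det

/-- The Alexander polynomial of a graph (or forest), defined as the matching polynomial
`Σ_R t^{|R|} (1-t)^{V - 2|R|}`, the sum being over all matchings `R`. -/
noncomputable def alexMatch (G : SimpleGraph V) : Polynomial ℤ :=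
  ∑ R : {R : Finset (Sym2 V) // IsMatching G R},
    X ^ R.1.card * (1 - X) ^ (Fintype.card V - 2 * R.1.card)


/-- The Dynkin diagram `D_n`: a path on the `n - 1` vertices `1, …, n-1` together with an
extra leaf `0` attached to the second vertex `2` of the path. -/
def dynkinD (n : ℕ) : SimpleGraph (Fin n) :=
  SimpleGraph.fromRel fun i j =>
    ((i : ℕ) = 0 ∧ (j : ℕ) = 2) ∨ (1 ≤ (i : ℕ) ∧ (j : ℕ) = (i : ℕ) + 1)

/-! In the permutation expansion of `det (t S - Sᵀ)` only permutations moving every vertex to a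
neighbour contribute. In a tree these are products of disjoint edge swaps, i.e. matchings `R`,
and each contributes `t^{|R|} (1-t)^{V-2|R|}` whatever the enumeration. This matching polynomial
satisfies the leaf recursion `W(T) = (1-t) W(T - v) + t W(T - v - w)` for a leaf `v` with
neighbour `w`; it gives `W(P_c) = Σ_{i ≤ c} (-t)^i` for the path on `c` vertices, and removing the
extra leaf of `D_n` gives `W(D_n) = (1-t) (W(P_{n-1}) + t W(P_{n-3}))`. -/

section

open Equiv Finset SimpleGraph

variable {α β : Type*}

/-- These permutations correspond to the matchings of `G`, so that `matchingPoly G` is the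
matching polynomial `Σ_R t^{|R|} (1-t)^{V-2|R|}`. -/
def IsMatchingInvolution (G : SimpleGraph α) (σ : Perm α) : Prop :=
  ∀ i, σ i ≠ i → σ (σ i) = i ∧ G.Adj (σ i) i

noncomputable def matchingWeight [Fintype α] [DecidableEq α] (G : SimpleGraph α) (σ : Perm α) :
    ℤ[X] :=
  if IsMatchingInvolution G σ then
    X ^ (#σ.support / 2) * (1 - X) ^ (Fintype.card α - #σ.support)
  else 0

noncomputable def matchingPoly [Fintype α] [DecidableEq α] (G : SimpleGraph α) : ℤ[X] :=
  ∑ σ : Perm α, matchingWeight G σ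

lemma IsMatchingInvolution.apply_apply {G : SimpleGraph α} {σ : Perm α}
    (hσ : IsMatchingInvolution G σ) (i : α) : σ (σ i) = i := by
  by_cases h : σ i = i
  · rw [h, h]
  · exact (hσ i h).1

lemma IsMatchingInvolution.sign_eq [Fintype α] [DecidableEq α] {G : SimpleGraph α}
    {σ : Perm α} (hσ : IsMatchingInvolution G σ) : Perm.sign σ = (-1) ^ (#σ.support / 2) := by
  have hsq : σ ^ 2 = 1 := Equiv.ext fun i => hσ.apply_apply i
  rw [Perm.sign_of_pow_two_eq_one hsq, Perm.card_fixedPoints, Perm.sum_cycleType,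
    Nat.sub_sub_self (card_le_univ _)]

@[to_additive]
lemma prod_support_eq_prod_filter_lt {M : Type*} [LinearOrder α] [Fintype α] [DecidableEq α]
    [CommMonoid M] {σ : Perm α} [DecidablePred fun i => i < σ i] (hσ : ∀ i, σ (σ i) = i)
    (g : α → M) :
    ∏ i ∈ σ.support, g i = ∏ i ∈ σ.support.filter (fun i => i < σ i), g i * g (σ i) := by
  rw [← prod_filter_mul_prod_filter_not σ.support (fun i => i < σ i), prod_mul_distrib]
  congr 1
  refine (prod_nbij' σ σ ?_ ?_ (fun a _ => hσ a) (fun a _ => hσ a) fun _ _ => rfl).symm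
  · intro a ha
    simp only [mem_filter, Perm.apply_mem_support, hσ] at ha ⊢
    exact ⟨ha.1, not_lt_of_gt ha.2⟩
  · intro a ha
    simp only [mem_filter, Perm.apply_mem_support, hσ, not_lt] at ha ⊢
    exact ⟨ha.1, lt_of_le_of_ne ha.2 (Perm.mem_support.mp ha.1)⟩

lemma support_permCongr [Fintype α] [DecidableEq α] [Fintype β] [DecidableEq β] (e : α ≃ β)
    (σ : Perm α) : (e.permCongr σ).support = σ.support.map e.toEmbedding := by
  ext j
  obtain ⟨i, rfl⟩ := e.surjective j
  simp [permCongr_apply]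

lemma isMatchingInvolution_permCongr (G : SimpleGraph β) (e : α ≃ β) (σ : Perm α) :
    IsMatchingInvolution G (e.permCongr σ) ↔ IsMatchingInvolution (G.comap e) σ := by
  rw [IsMatchingInvolution, ← e.forall_congr_right]
  simp only [permCongr_apply, symm_apply_apply, ne_eq, EmbeddingLike.apply_eq_iff_eq,
    comap_adj, IsMatchingInvolution]

lemma matchingPoly_comap_equiv [Fintype α] [DecidableEq α] [Fintype β] [DecidableEq β]
    (G : SimpleGraph β) (e : α ≃ β) : matchingPoly (G.comap e) = matchingPoly G :=
  Fintype.sum_equiv e.permCongr _ _ fun σ => by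
    simp only [matchingWeight, isMatchingInvolution_permCongr, support_permCongr, card_map,
      Fintype.card_congr e]

/-- Holds for a breadth-first numbering of a forest, and stands in for acyclicity. -/
def HasUniqueLowerNeighbour (G : SimpleGraph α) (f : α → ℕ) : Prop :=
  ∀ v a b, G.Adj v a → G.Adj v b → f a < f v → f b < f v → a = b

lemma HasUniqueLowerNeighbour.comap {G : SimpleGraph β} {f : β → ℕ}
    (hG : HasUniqueLowerNeighbour G f) {g : α → β} (hg : Function.Injective g) :
    HasUniqueLowerNeighbour (G.comap g) (f ∘ g) :=
  fun v a b hva hvb ha hb => hg (hG (g v) (g a) (g b) hva hvb ha hb)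

/-- A cycle of length at least `3` would contain a vertex of maximal number with two lower
neighbours. -/
lemma isMatchingInvolution_of_forall_adj [Fintype α] {G : SimpleGraph α} {f : α → ℕ}
    (hf : Function.Injective f) (hG : HasUniqueLowerNeighbour G f) {σ : Perm α}
    (hσ : ∀ i, σ i ≠ i → G.Adj (σ i) i) : IsMatchingInvolution G σ := by
  intro i hi
  refine ⟨?_, hσ i hi⟩
  by_contra hii
  have hshift : ∀ j, σ (σ j) ≠ j ↔ σ (σ (σ j)) ≠ σ j := fun j => σ.injective.ne_iff.symm
  obtain ⟨v, hv, hmax⟩ := (univ.filter fun j => σ (σ j) ≠ j).exists_max_image f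
    ⟨i, mem_filter.mpr ⟨mem_univ i, hii⟩⟩
  simp only [mem_filter, mem_univ, true_and] at hv hmax
  have hlt : ∀ w, σ (σ w) ≠ w → w ≠ v → f w < f v := fun w hw hwv =>
    (hmax w hw).lt_of_ne (hf.ne hwv)
  set u := σ.symm v
  have hu : σ u = v := σ.apply_symm_apply v
  have hvv : σ v ≠ v := fun h => hv (by rw [h, h])
  have huv : u ≠ v := fun h => hvv (h ▸ hu)
  have hσv : σ v = u := hG v (σ v) u (hσ v hvv).symm (hu ▸ hσ u (hu ▸ huv.symm))
    (hlt _ ((hshift v).mp hv) hvv) (hlt u ((hshift u).mpr (by rwa [hu])) huv)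
  exact hv (by rw [hσv, hu])

variable {m : ℕ}

/-- `t S - Sᵀ` for the Seifert matrix `S` of a graph on `Fin m` enumerated in its own order. -/
noncomputable def alexMatrix (H : SimpleGraph (Fin m)) : Matrix (Fin m) (Fin m) ℤ[X] :=
  fun i j => if i = j then 1 - X else
    if i < j ∧ H.Adj i j then X else if j < i ∧ H.Adj j i then -1 else 0

lemma alexDet_eq_det_alexMatrix {W : Type} (G : SimpleGraph W) (e : W ≃ Fin m) :
    alexDet G e = (alexMatrix (G.comap e.symm)).det := by
  simp only [alexDet]
  congr 1
  ext i j : 1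
  rcases lt_trichotomy i j with hij | rfl | hij
  · simp [seifertMatrix, alexMatrix, hij, hij.ne, hij.ne', not_lt_of_gt hij]
  · simp [seifertMatrix, alexMatrix]
    ring
  · simp [seifertMatrix, alexMatrix, hij, hij.ne, hij.ne', not_lt_of_gt hij, apply_ite]

lemma alexMatrix_apply_self (H : SimpleGraph (Fin m)) (i : Fin m) : alexMatrix H i i = 1 - X := by
  simp [alexMatrix]

lemma alexMatrix_apply_of_lt {H : SimpleGraph (Fin m)} {i j : Fin m} (hij : i < j)
    (hadj : H.Adj i j) : alexMatrix H i j = X ∧ alexMatrix H j i = -1 := by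
  simp [alexMatrix, hij, hadj, hij.ne, hij.ne', not_lt_of_gt hij]

lemma alexMatrix_apply_eq_zero {H : SimpleGraph (Fin m)} {i j : Fin m} (hij : i ≠ j)
    (hadj : ¬ H.Adj i j) : alexMatrix H i j = 0 := by
  have hadj' : ¬ H.Adj j i := fun h => hadj h.symm
  simp [alexMatrix, hij, hadj, hadj']

lemma IsMatchingInvolution.sign_smul_prod_alexMatrix {H : SimpleGraph (Fin m)}
    {σ : Perm (Fin m)} (hσ : IsMatchingInvolution H σ) :
    Perm.sign σ • ∏ i, alexMatrix H (σ i) i = matchingWeight H σ := by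
  have hswaps : ∏ i ∈ σ.support, alexMatrix H (σ i) i = (-X) ^ (#σ.support / 2) := by
    rw [prod_support_eq_prod_filter_lt hσ.apply_apply, card_eq_sum_ones,
      sum_support_eq_sum_filter_lt hσ.apply_apply, sum_const, smul_eq_mul, one_add_one_eq_two,
      Nat.mul_div_cancel _ two_pos, ← prod_const]
    refine prod_congr rfl fun i hi => ?_
    obtain ⟨hmoved, hlt⟩ := mem_filter.mp hi
    obtain ⟨hup, hdown⟩ := alexMatrix_apply_of_lt hlt (hσ i (Perm.mem_support.mp hmoved)).2.symm
    rw [hσ.apply_apply, hup, hdown, neg_one_mul]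
  have hfixed : ∏ i ∈ σ.supportᶜ, alexMatrix H (σ i) i = (1 - X) ^ (m - #σ.support) := by
    rw [prod_congr rfl fun i hi => by rw [Perm.notMem_support.mp (mem_compl.mp hi),
      alexMatrix_apply_self], prod_const, card_compl, Fintype.card_fin]
  rw [← prod_mul_prod_compl σ.support, hswaps, hfixed, hσ.sign_eq, matchingWeight, if_pos hσ,
    Fintype.card_fin, Units.smul_def, zsmul_eq_mul]
  push_cast
  rw [← mul_assoc, ← mul_pow, neg_one_mul, neg_neg]

theorem det_alexMatrix {H : SimpleGraph (Fin m)} {f : Fin m → ℕ} (hf : Function.Injective f)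
    (hH : HasUniqueLowerNeighbour H f) : (alexMatrix H).det = matchingPoly H := by
  rw [Matrix.det_apply, matchingPoly]
  refine sum_congr rfl fun σ _ => ?_
  by_cases hσ : IsMatchingInvolution H σ
  · exact hσ.sign_smul_prod_alexMatrix
  obtain ⟨i, hi, hna⟩ : ∃ i, σ i ≠ i ∧ ¬ H.Adj (σ i) i := by
    by_contra! h
    exact hσ (isMatchingInvolution_of_forall_adj hf hH h)
  rw [matchingWeight, if_neg hσ, prod_eq_zero (f := fun j => alexMatrix H (σ j) j) (mem_univ i)
    (alexMatrix_apply_eq_zero hi hna), smul_zero]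

lemma isMatchingInvolution_deleteIncidenceSet (G : SimpleGraph α) (v : α) (τ : Perm α) :
    IsMatchingInvolution (G.deleteIncidenceSet v) τ ↔ IsMatchingInvolution G τ ∧ τ v = v := by
  constructor
  · intro h
    refine ⟨fun i hi => ⟨(h i hi).1, G.deleteIncidenceSet_le v (h i hi).2⟩, ?_⟩
    by_contra hv
    exact (deleteIncidenceSet_adj.mp (h v hv).2).2.2 rfl
  · rintro ⟨h, hv⟩ i hi
    have hiv : i ≠ v := fun hiv => hi (hiv ▸ hv)
    have hτiv : τ i ≠ v := fun h' => hiv (τ.injective (h'.trans hv.symm))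
    exact ⟨(h i hi).1, deleteIncidenceSet_adj.mpr ⟨(h i hi).2, hτiv, hiv⟩⟩

lemma matchingWeight_deleteIncidenceSet [Fintype α] [DecidableEq α] (G : SimpleGraph α) (v : α)
    (τ : Perm α) :
    matchingWeight (G.deleteIncidenceSet v) τ = if τ v = v then matchingWeight G τ else 0 := by
  by_cases hv : τ v = v <;>
    simp [matchingWeight, isMatchingInvolution_deleteIncidenceSet, hv]

lemma isMatchingInvolution_swap_mul [DecidableEq α] {G : SimpleGraph α} {a b : α}
    (hab : G.Adj a b) {ρ : Perm α} (ha : ρ a = a) (hb : ρ b = b) :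
    IsMatchingInvolution G (swap a b * ρ) ↔ IsMatchingInvolution G ρ := by
  have hρ : ∀ i, i ≠ a → i ≠ b → ρ i ≠ a ∧ ρ i ≠ b := fun i hia hib =>
    ⟨fun h => hia (ρ.injective (h.trans ha.symm)), fun h => hib (ρ.injective (h.trans hb.symm))⟩
  constructor
  · intro h i hi
    have hia : i ≠ a := fun h' => hi (h' ▸ ha)
    have hib : i ≠ b := fun h' => hi (h' ▸ hb)
    obtain ⟨hρa, hρb⟩ := hρ i hia hib
    obtain ⟨hρρa, hρρb⟩ := hρ (ρ i) hρa hρb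
    have key := h i (by rwa [Perm.mul_apply, swap_apply_of_ne_of_ne hρa hρb])
    simpa only [Perm.mul_apply, swap_apply_of_ne_of_ne hρa hρb,
      swap_apply_of_ne_of_ne hρρa hρρb] using key
  · intro h i hi
    rcases eq_or_ne i a with rfl | hia
    · simp [ha, hb, hab.symm]
    rcases eq_or_ne i b with rfl | hib
    · simp [ha, hb, hab]
    obtain ⟨hρa, hρb⟩ := hρ i hia hib
    obtain ⟨hρρa, hρρb⟩ := hρ (ρ i) hρa hρb
    simp only [Perm.mul_apply, swap_apply_of_ne_of_ne hρa hρb, swap_apply_of_ne_of_ne hρρa hρρb]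
      at hi ⊢
    exact h i hi

lemma card_support_swap_mul_of_fixed [Fintype α] [DecidableEq α] {a b : α} (hab : a ≠ b)
    {ρ : Perm α} (ha : ρ a = a) (hb : ρ b = b) :
    #(swap a b * ρ).support = #ρ.support + 2 := by
  have hdisj : Perm.Disjoint (swap a b) ρ := fun i => by
    rcases eq_or_ne i a with rfl | hia
    · simp [ha]
    rcases eq_or_ne i b with rfl | hib
    · simp [hb]
    exact Or.inl (swap_apply_of_ne_of_ne hia hib)
  rw [hdisj.card_support_mul, Perm.card_support_swap hab, add_comm]

lemma matchingWeight_swap_mul [Fintype α] [DecidableEq α] {G : SimpleGraph α} {a b : α}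
    (hab : G.Adj a b) {ρ : Perm α} (ha : ρ a = a) (hb : ρ b = b) :
    (1 - X) ^ 2 * matchingWeight G (swap a b * ρ) = X * matchingWeight G ρ := by
  have hcard := card_support_swap_mul_of_fixed hab.ne ha hb
  have hle : #ρ.support + 2 ≤ Fintype.card α := hcard ▸ card_le_univ _
  rw [matchingWeight, matchingWeight, isMatchingInvolution_swap_mul hab ha hb, hcard]
  split_ifs
  · rw [Nat.add_div_right _ two_pos, show Fintype.card α - #ρ.support =
      Fintype.card α - (#ρ.support + 2) + 2 by omega]
    ring
  · simp

lemma matchingPoly_of_isEmpty [Fintype α] [DecidableEq α] [IsEmpty α] (G : SimpleGraph α) :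
    matchingPoly G = 1 := by
  simp [matchingPoly, matchingWeight, IsMatchingInvolution]

lemma comap_deleteIncidenceSet (G : SimpleGraph β) {f : α → β} (hf : Function.Injective f)
    (v : α) : (G.deleteIncidenceSet (f v)).comap f = (G.comap f).deleteIncidenceSet v := by
  ext a b
  simp [deleteIncidenceSet_adj, hf.ne_iff]

lemma one_sub_X_ne_zero : (1 - X : ℤ[X]) ≠ 0 := fun h => by
  simpa using congrArg (eval 0) h

variable {k : ℕ}

lemma decomposeFin_symm_eq_swap_mul (p : Fin (k + 1)) (τ : Perm (Fin k)) :
    Perm.decomposeFin.symm (p, τ) = swap 0 p * Perm.decomposeFin.symm (0, τ) := by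
  ext x
  cases x using Fin.cases <;> simp

lemma support_decomposeFin_symm_zero (τ : Perm (Fin k)) :
    (Perm.decomposeFin.symm (0, τ)).support = τ.support.map (Fin.succEmb k) := by
  ext x
  cases x using Fin.cases <;> simp

lemma isMatchingInvolution_decomposeFin_symm_zero (H : SimpleGraph (Fin (k + 1)))
    (τ : Perm (Fin k)) :
    IsMatchingInvolution H (Perm.decomposeFin.symm (0, τ)) ↔
      IsMatchingInvolution (H.comap Fin.succ) τ := by
  simp [IsMatchingInvolution, Fin.forall_fin_succ]

lemma matchingWeight_decomposeFin_symm_zero (H : SimpleGraph (Fin (k + 1))) (τ : Perm (Fin k)) :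
    matchingWeight H (Perm.decomposeFin.symm (0, τ)) =
      (1 - X) * matchingWeight (H.comap Fin.succ) τ := by
  have hle : #τ.support ≤ k := by simpa using card_le_univ τ.support
  rw [matchingWeight, matchingWeight, isMatchingInvolution_decomposeFin_symm_zero,
    support_decomposeFin_symm_zero, card_map]
  split_ifs
  · rw [Fintype.card_fin, Fintype.card_fin, show k + 1 - #τ.support = k - #τ.support + 1 by omega]
    ring
  · simp

lemma matchingWeight_decomposeFin_symm_of_not_adj {H : SimpleGraph (Fin (k + 1))}
    {p : Fin (k + 1)} (hp : p ≠ 0) (hadj : ¬ H.Adj 0 p) (τ : Perm (Fin k)) :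
    matchingWeight H (Perm.decomposeFin.symm (p, τ)) = 0 := by
  rw [matchingWeight, if_neg fun h => hadj ?_]
  simpa using (h 0 (by simpa using hp)).2.symm

lemma matchingWeight_decomposeFin_symm_of_adj {H : SimpleGraph (Fin (k + 1))} {b : Fin (k + 1)}
    (hb : H.Adj 0 b) (τ : Perm (Fin k)) :
    (1 - X) * matchingWeight H (Perm.decomposeFin.symm (b, τ)) =
      X * matchingWeight ((H.comap Fin.succ).deleteIncidenceSet (b.pred hb.ne')) τ := by
  obtain ⟨j, rfl⟩ := Fin.exists_succ_eq.mpr hb.ne'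
  rw [matchingWeight_deleteIncidenceSet, Fin.pred_succ]
  split_ifs with hj
  · refine mul_left_cancel₀ one_sub_X_ne_zero ?_
    calc (1 - X) * ((1 - X) * matchingWeight H (Perm.decomposeFin.symm (j.succ, τ)))
        = (1 - X) ^ 2 * matchingWeight H (swap 0 j.succ * Perm.decomposeFin.symm (0, τ)) := by
          rw [decomposeFin_symm_eq_swap_mul]; ring
      _ = X * matchingWeight H (Perm.decomposeFin.symm (0, τ)) :=
          matchingWeight_swap_mul hb (by simp) (by simp [hj])
      _ = (1 - X) * (X * matchingWeight (H.comap Fin.succ) τ) := by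
          rw [matchingWeight_decomposeFin_symm_zero]; ring
  · rw [mul_zero, matchingWeight, if_neg, mul_zero]
    intro h
    have h00 := (h 0 (by simp [hb.ne'])).1
    simp [swap_apply_of_ne_of_ne, hj] at h00

lemma matchingPoly_eq_sum_decomposeFin (H : SimpleGraph (Fin (k + 1))) :
    matchingPoly H = ∑ p, ∑ τ, matchingWeight H (Perm.decomposeFin.symm (p, τ)) := by
  rw [matchingPoly, ← Perm.decomposeFin.symm.sum_comp, Fintype.sum_prod_type]

lemma sum_matchingWeight_decomposeFin_symm_zero (H : SimpleGraph (Fin (k + 1))) :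
    ∑ τ, matchingWeight H (Perm.decomposeFin.symm (0, τ)) =
      (1 - X) * matchingPoly (H.comap Fin.succ) := by
  simp only [matchingWeight_decomposeFin_symm_zero, matchingPoly, mul_sum]

lemma matchingPoly_of_forall_not_adj {H : SimpleGraph (Fin (k + 1))} (h0 : ∀ c, ¬ H.Adj 0 c) :
    matchingPoly H = (1 - X) * matchingPoly (H.comap Fin.succ) := by
  rw [matchingPoly_eq_sum_decomposeFin, Fin.sum_univ_succ,
    sum_matchingWeight_decomposeFin_symm_zero, add_eq_left]
  exact sum_eq_zero fun p _ => sum_eq_zero fun τ _ =>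
    matchingWeight_decomposeFin_symm_of_not_adj (Fin.succ_ne_zero p) (h0 _) τ

/-- The neighbour of the leaf `0` is isolated rather than deleted in the last term, whence the
extra factor `1 - X`. -/
lemma matchingPoly_of_leaf {H : SimpleGraph (Fin (k + 1))} {b : Fin (k + 1)} (hb : H.Adj 0 b)
    (huniq : ∀ c, H.Adj 0 c → c = b) :
    (1 - X) * matchingPoly H = (1 - X) ^ 2 * matchingPoly (H.comap Fin.succ) +
      X * matchingPoly ((H.comap Fin.succ).deleteIncidenceSet (b.pred hb.ne')) := by
  have hleaf : (1 - X) * ∑ τ, matchingWeight H (Perm.decomposeFin.symm (b, τ)) =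
      X * matchingPoly ((H.comap Fin.succ).deleteIncidenceSet (b.pred hb.ne')) := by
    rw [matchingPoly, mul_sum, mul_sum]
    exact sum_congr rfl fun τ _ => matchingWeight_decomposeFin_symm_of_adj hb τ
  rw [matchingPoly_eq_sum_decomposeFin, Fintype.sum_eq_add 0 b hb.ne fun p hp =>
      sum_eq_zero fun τ _ =>
        matchingWeight_decomposeFin_symm_of_not_adj hp.1 (fun h => hp.2 (huniq p h)) τ,
    sum_matchingWeight_decomposeFin_symm_zero, mul_add, hleaf]
  ring

lemma matchingPoly_deleteIncidenceSet_zero (G : SimpleGraph (Fin (k + 1))) :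
    matchingPoly (G.deleteIncidenceSet 0) = (1 - X) * matchingPoly (G.comap Fin.succ) := by
  rw [matchingPoly_of_forall_not_adj fun c h => (deleteIncidenceSet_adj.mp h).2.1 rfl]
  congr 2
  ext a b
  simp [deleteIncidenceSet_adj, Fin.succ_ne_zero]

lemma pathGraph_comap_succ (c : ℕ) : (pathGraph (c + 1)).comap Fin.succ = pathGraph c := by
  ext a b
  simp only [comap_adj, pathGraph_adj, Fin.val_succ]
  omega

lemma matchingPoly_pathGraph_add_two (c : ℕ) :
    matchingPoly (pathGraph (c + 2)) =
      (1 - X) * matchingPoly (pathGraph (c + 1)) + X * matchingPoly (pathGraph c) := by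
  have hadj : (pathGraph (c + 2)).Adj 0 1 := by simp [pathGraph_adj]
  have huniq : ∀ d, (pathGraph (c + 2)).Adj 0 d → d = 1 := fun d hd => by
    rw [pathGraph_adj] at hd
    ext
    simp only [Fin.val_zero, Fin.val_one] at hd ⊢
    omega
  refine mul_left_cancel₀ one_sub_X_ne_zero ?_
  rw [matchingPoly_of_leaf hadj huniq, pathGraph_comap_succ,
    show (1 : Fin (c + 2)).pred hadj.ne' = 0 from rfl, matchingPoly_deleteIncidenceSet_zero,
    pathGraph_comap_succ]
  ring

lemma matchingPoly_pathGraph (c : ℕ) :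
    matchingPoly (pathGraph c) = ∑ i ∈ range (c + 1), (-X) ^ i := by
  induction c using Nat.twoStepInduction with
  | zero => simp [matchingPoly_of_isEmpty]
  | one =>
    rw [matchingPoly_of_forall_not_adj (by simp [pathGraph_adj]), matchingPoly_of_isEmpty]
    simp [sum_range_succ, sub_eq_add_neg]
  | more c ih₀ ih₁ =>
    rw [matchingPoly_pathGraph_add_two, ih₀, ih₁, sum_range_succ _ (c + 2),
      sum_range_succ _ (c + 1)]
    ring

lemma dynkinD_adj_iff {n : ℕ} (a b : Fin n) :
    (dynkinD n).Adj a b ↔ ((a : ℕ) = 0 ∧ (b : ℕ) = 2) ∨ ((b : ℕ) = 0 ∧ (a : ℕ) = 2) ∨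
      (1 ≤ (a : ℕ) ∧ (b : ℕ) = a + 1) ∨ (1 ≤ (b : ℕ) ∧ (a : ℕ) = b + 1) := by
  rw [dynkinD, fromRel_adj, ne_eq, Fin.ext_iff]
  omega

lemma dynkinD_comap_succ (c : ℕ) : (dynkinD (c + 1)).comap Fin.succ = pathGraph c := by
  ext a b
  simp only [comap_adj, dynkinD_adj_iff, pathGraph_adj, Fin.val_succ]
  omega

lemma matchingPoly_dynkinD_add_four (j : ℕ) :
    matchingPoly (dynkinD (j + 4)) =
      (1 - X) * (matchingPoly (pathGraph (j + 3)) + X * matchingPoly (pathGraph (j + 1))) := by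
  have hadj : (dynkinD (j + 4)).Adj 0 2 := by simp [dynkinD_adj_iff]
  have huniq : ∀ d, (dynkinD (j + 4)).Adj 0 d → d = 2 := fun d hd => by
    rw [dynkinD_adj_iff] at hd
    ext
    simp only [Fin.val_zero, Fin.val_two] at hd ⊢
    omega
  have hcut : matchingPoly ((pathGraph (j + 3)).deleteIncidenceSet 1) =
      (1 - X) ^ 2 * matchingPoly (pathGraph (j + 1)) := by
    rw [matchingPoly_of_forall_not_adj fun c h => ?_, ← Fin.succ_zero_eq_one,
      comap_deleteIncidenceSet _ (Fin.succ_injective _), pathGraph_comap_succ,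
      matchingPoly_deleteIncidenceSet_zero, pathGraph_comap_succ]
    · ring
    obtain ⟨h, -, hc⟩ := deleteIncidenceSet_adj.mp h
    rw [pathGraph_adj] at h
    exact hc (Fin.ext (by simp at h ⊢; omega))
  refine mul_left_cancel₀ one_sub_X_ne_zero ?_
  rw [matchingPoly_of_leaf hadj huniq, dynkinD_comap_succ,
    show (2 : Fin (j + 4)).pred hadj.ne' = 1 from rfl, hcut]
  ring

theorem matchingPoly_dynkinD {n : ℕ} (hn : 4 ≤ n) :
    matchingPoly (dynkinD n) = 1 - X + (-X) ^ (n - 1) + (-X) ^ n := by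
  obtain ⟨j, rfl⟩ : ∃ j, n = j + 4 := ⟨n - 4, by omega⟩
  have hgeom (c : ℕ) :
      (1 + X) * matchingPoly (pathGraph c) = 1 - (-X) ^ (c + 1) := by
    rw [matchingPoly_pathGraph, ← mul_neg_geom_sum, sub_neg_eq_add]
  refine mul_left_cancel₀ (show (1 + X : ℤ[X]) ≠ 0 from fun h => by
    simpa using congrArg (eval 0) h) ?_
  rw [matchingPoly_dynkinD_add_four, show j + 4 - 1 = j + 3 from rfl]
  linear_combination (1 - X) * hgeom (j + 3) + (1 - X) * X * hgeom (j + 1)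

/-- A breadth-first numbering of `D_n` from the branch vertex `2`. -/
def dynkinDOrder (n : ℕ) (v : Fin n) : ℕ :=
  if (v : ℕ) = 2 then 0 else if (v : ℕ) = 0 then 1 else if (v : ℕ) = 1 then 2 else v

lemma dynkinDOrder_injective (n : ℕ) : Function.Injective (dynkinDOrder n) := by
  intro a b h
  ext
  unfold dynkinDOrder at h
  split_ifs at h <;> omega

lemma hasUniqueLowerNeighbour_dynkinD (n : ℕ) :
    HasUniqueLowerNeighbour (dynkinD n) (dynkinDOrder n) := by
  intro v a b hva hvb ha hb
  rw [dynkinD_adj_iff] at hva hvb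
  ext
  unfold dynkinDOrder at ha hb
  split_ifs at ha hb <;> omega

end

/-- the Alexander polynomial of the Dynkin diagram `D_n` is
`1 - t + (-1)^{n-1} t^{n-1} + (-1)ⁿ tⁿ`. -/
theorem alexDet_dynkinD (n : ℕ) (hn : 4 ≤ n) {m : ℕ} (e : Fin n ≃ Fin m) :
    alexDet (dynkinD n) e =
      1 - X + (-1 : Polynomial ℤ) ^ (n - 1) * X ^ (n - 1) +
        (-1 : Polynomial ℤ) ^ n * X ^ n := by
  rw [alexDet_eq_det_alexMatrix, det_alexMatrix ((dynkinDOrder_injective n).comp e.symm.injective)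
    ((hasUniqueLowerNeighbour_dynkinD n).comap e.symm.injective), matchingPoly_comap_equiv,
    matchingPoly_dynkinD hn, neg_pow (X : ℤ[X]), neg_pow (X : ℤ[X])]

end Seifert
end

section
/- Let n ≥ 4 and let S_n denote the star tree on n vertices, with one vertex of degree n−1 adjacent to n−1 leaves. Then for every integer m with 2 ≤ m ≤ n−2, the first-level Seifert cohomology satisfies dim SH^{m−1}(S_n, m) = (n−1)·C(n−2, m−1) − C(n, m) + 1, where C(a,b) denotes the binomial coefficient. -/
open Polynomial Matrix

attribute [local instance] Classical.propDecidable

namespace Seifert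

variable {V : Type} [Fintype V]

/-- The star `S_n` on `n` vertices: the central vertex `0` is adjacent to the `n - 1`
leaves, and there are no other edges. -/
def starGraph (n : ℕ) : SimpleGraph (Fin n) :=
  SimpleGraph.fromRel fun i _ => (i : ℕ) = 0

omit [Fintype V] in
lemma config_ext {G : SimpleGraph V} {C C' : Config G} (h1 : C.red = C'.red)
    (h2 : C.sign = C'.sign) : C = C' := by
  cases C; cases C'; simp_all


noncomputable def ind {α : Type} (a : α) : α → ZMod 2 := fun x => if x = a then 1 else 0

noncomputable def eps {ι : Type} [Fintype ι] : (ι → ZMod 2) →ₗ[ZMod 2] ZMod 2 where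
  toFun f := ∑ b, f b
  map_add' f g := by simp [Finset.sum_add_distrib]
  map_smul' c f := by simp [Finset.mul_sum]

lemma eps_ind {ι : Type} [Fintype ι] (a : ι) : eps (ind a) = 1 := by
  simp [eps, ind]

lemma sumLin_ind {α β : Type} [Fintype α] (r : α → β → Prop) (a : α) :
    sumLin r (ind a) = fun b => if r a b then 1 else 0 := by
  funext b
  simp only [sumLin, LinearMap.coe_mk, AddHom.coe_mk, ind]
  rw [Finset.sum_congr rfl (fun a' _ => show (if r a' b then (if a' = a then (1:ZMod 2) else 0) else 0)
      = if a' = a then (if r a b then 1 else 0) else 0 by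
    by_cases h : a' = a <;> simp [h])]
  simp

lemma finrank_ker_eps {ι : Type} [Fintype ι] [Nonempty ι] :
    Module.finrank (ZMod 2) (LinearMap.ker (eps (ι := ι))) = Fintype.card ι - 1 := by
  have hsurj : LinearMap.range (eps (ι := ι)) = ⊤ := by
    rw [LinearMap.range_eq_top]
    intro c
    exact ⟨c • ind (Classical.arbitrary ι), by simp [eps_ind, _root_.map_smul]⟩
  have h := LinearMap.finrank_range_add_finrank_ker (eps (ι := ι))
  rw [hsurj, Module.finrank_fintype_fun_eq_card] at h
  rw [finrank_top, Module.finrank_self] at h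
  omega


lemma sumLin_conj {α β α' β' : Type} [Fintype α] [Fintype α'] [Fintype β] [Fintype β']
    (r : α → β → Prop) (r' : α' → β' → Prop) (ea : α' ≃ α) (eb : β' ≃ β)
    (h : ∀ a b, r (ea a) (eb b) ↔ r' a b) :
    Module.finrank (ZMod 2) (LinearMap.range (sumLin r)) =
      Module.finrank (ZMod 2) (LinearMap.range (sumLin r')) := by
  let Pa : (α → ZMod 2) ≃ₗ[ZMod 2] (α' → ZMod 2) := LinearEquiv.funCongrLeft (ZMod 2) (ZMod 2) ea
  let Pb : (β → ZMod 2) ≃ₗ[ZMod 2] (β' → ZMod 2) := LinearEquiv.funCongrLeft (ZMod 2) (ZMod 2) eb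
  have key : (sumLin r').comp (Pa : (α → ZMod 2) →ₗ[ZMod 2] (α' → ZMod 2))
      = (Pb : (β → ZMod 2) →ₗ[ZMod 2] (β' → ZMod 2)).comp (sumLin r) := by
    apply LinearMap.ext; intro f
    funext b
    simp only [LinearMap.comp_apply, sumLin, LinearMap.coe_mk, AddHom.coe_mk]
    have hPb : (Pb (fun b => ∑ a : α, if r a b then f a else 0)) b
        = ∑ a : α, if r a (eb b) then f a else 0 := rfl
    rw [show (((Pb : (β → ZMod 2) ≃ₗ[ZMod 2] (β' → ZMod 2)) : (β → ZMod 2) →ₗ[ZMod 2] (β' → ZMod 2)) (fun b => ∑ a : α, if r a b then f a else 0)) b = ∑ a : α, if r a (eb b) then f a else 0 from hPb,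
      ← Equiv.sum_comp ea (fun a => if r a (eb b) then f a else 0)]
    refine Finset.sum_congr rfl fun a' _ => ?_
    rw [h a' b]
    rfl
  have h1 : LinearMap.range ((sumLin r').comp (Pa : (α → ZMod 2) →ₗ[ZMod 2] (α' → ZMod 2)))
      = LinearMap.range (sumLin r') := by
    rw [LinearMap.range_comp, LinearEquiv.range, Submodule.map_top]
  have h2 : LinearMap.range ((Pb : (β → ZMod 2) →ₗ[ZMod 2] (β' → ZMod 2)).comp (sumLin r))
      = Submodule.map (Pb : (β → ZMod 2) →ₗ[ZMod 2] (β' → ZMod 2)) (LinearMap.range (sumLin r)) :=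
    LinearMap.range_comp _ _
  rw [← h1, key, h2]
  exact (LinearEquiv.finrank_map_eq Pb _).symm

section Star
variable {n : ℕ} [NeZero n]

lemma star_adj {a b : Fin n} : (starGraph n).Adj a b ↔ a ≠ b ∧ (a = 0 ∨ b = 0) := by
  simp only [starGraph, SimpleGraph.fromRel_adj]
  constructor
  · rintro ⟨h, h2 | h2⟩
    · exact ⟨h, Or.inl (Fin.ext (by simpa using h2))⟩
    · exact ⟨h, Or.inr (Fin.ext (by simpa using h2))⟩
  · rintro ⟨h, h2 | h2⟩
    · exact ⟨h, Or.inl (by simp [h2])⟩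
    · exact ⟨h, Or.inr (by simp [h2])⟩

lemma star_edge {e : Sym2 (Fin n)} (he : e ∈ (starGraph n).edgeSet) :
    ∃ i : Fin n, i ≠ 0 ∧ e = s(0, i) := by
  induction e with
  | _ a b =>
    rw [SimpleGraph.mem_edgeSet, star_adj] at he
    obtain ⟨hne, h | h⟩ := he
    · exact ⟨b, fun hb => hne (by rw [h, hb]), by rw [h]⟩
    · exact ⟨a, by rintro rfl; simp [h] at hne, by rw [h, Sym2.eq_swap]⟩

lemma matching_card_le_one {R : Finset (Sym2 (Fin n))} (h : IsMatching (starGraph n) R) :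
    R.card ≤ 1 := by
  by_contra hc
  push_neg at hc
  obtain ⟨e, he, f, hf, hef⟩ := Finset.one_lt_card.mp hc
  obtain ⟨i, hi, rfl⟩ := star_edge (h.1 e he)
  obtain ⟨j, hj, rfl⟩ := star_edge (h.1 f hf)
  exact h.2 _ he _ hf hef 0 (by simp) (by simp)

/-- configuration with empty matching, minuses on `S` -/
noncomputable def cfg0 (S : Finset (Fin n)) : Config (starGraph n) where
  red := ∅
  matching := ⟨by simp, by simp⟩
  sign v := if v ∈ S then some false else some true
  sign_none v := by by_cases h : v ∈ S <;> simp [h]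

lemma Qg_cfg0 (S : Finset (Fin n)) : Qg (cfg0 S) = S.card := by
  unfold Qg cfg0
  congr 1
  ext v
  by_cases h : v ∈ S <;> simp [h]

lemma Eg_cfg0 (S : Finset (Fin n)) : Eg (cfg0 S) = S.card := by
  unfold Eg
  rw [Qg_cfg0]
  simp [cfg0]

/-- configuration with red edge `s(0,i)`, minuses on `S` -/
noncomputable def cfg1 (i : Fin n) (hi : i ≠ 0) (S : Finset (Fin n)) : Config (starGraph n) where
  red := {s(0, i)}
  matching := by
    constructor
    · intro e he
      rw [Finset.mem_singleton] at he
      subst he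
      rw [SimpleGraph.mem_edgeSet, star_adj]
      exact ⟨Ne.symm hi, Or.inl rfl⟩
    · intro e he f hf hef
      rw [Finset.mem_singleton] at he hf
      exact absurd (he.trans hf.symm) hef
  sign v := if v = 0 ∨ v = i then none else if v ∈ S then some false else some true
  sign_none v := by
    by_cases h : v = 0 ∨ v = i
    · simp only [if_pos h]
      simp only [Finset.mem_singleton, true_and, exists_eq_left, Sym2.mem_iff]
      tauto
    · simp only [if_neg h]
      simp only [Finset.mem_singleton, exists_eq_left, Sym2.mem_iff]
      push_neg at h
      by_cases hS : v ∈ S <;> simp [hS, h.1, h.2]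

lemma Qg_cfg1 {i : Fin n} (hi : i ≠ 0) {S : Finset (Fin n)} (h0 : 0 ∉ S) (hiS : i ∉ S) :
    Qg (cfg1 i hi S) = S.card := by
  unfold Qg cfg1
  congr 1
  ext v
  simp only [Finset.mem_filter, Finset.mem_univ, true_and]
  by_cases h : v = 0 ∨ v = i
  · rcases h with rfl | rfl <;> simp [h0, hiS]
  · push_neg at h
    by_cases hS : v ∈ S <;> simp [h, hS]

lemma Eg_cfg1 {i : Fin n} (hi : i ≠ 0) {S : Finset (Fin n)} (h0 : 0 ∉ S) (hiS : i ∉ S) :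
    Eg (cfg1 i hi S) = S.card + 1 := by
  unfold Eg
  rw [Qg_cfg1 hi h0 hiS]
  simp [cfg1]

end Star

section Bij
variable {n m : ℕ} [NeZero n]

/-- minus set of a configuration -/
noncomputable def minusSet {G : SimpleGraph (Fin n)} (C : Config G) : Finset (Fin n) :=
  Finset.univ.filter fun v => C.sign v = some false

lemma minusSet_card {G : SimpleGraph (Fin n)} (C : Config G) : (minusSet C).card = Qg C := rfl

noncomputable def Gmap (k e : ℤ) (hk : (m : ℤ) = k) (he : (m : ℤ) = e)
    (q : {S : Finset (Fin n) // S.card = m}) :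
    {C : Config (starGraph n) // (Qg C : ℤ) = k ∧ (Eg C : ℤ) = e} :=
  ⟨cfg0 q.1, by rw [Qg_cfg0, q.2]; exact hk, by rw [Eg_cfg0, q.2]; exact he⟩

lemma Gmap_bij (k e : ℤ) (hk : (m : ℤ) = k) (he : (m : ℤ) = e) :
    Function.Bijective (Gmap (n := n) (m := m) k e hk he) := by
  constructor
  · rintro ⟨S, hS⟩ ⟨T, hT⟩ h
    have h2 : cfg0 (n := n) S = cfg0 T := congrArg Subtype.val h
    have h3 : (cfg0 (n := n) S).sign = (cfg0 T).sign := congrArg Config.sign h2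
    apply Subtype.ext
    ext v
    have := congrFun h3 v
    by_cases hv : v ∈ S <;> by_cases hv' : v ∈ T <;> simp [cfg0, hv, hv'] at this ⊢
  · rintro ⟨C, hQ, hE⟩
    have hEg : Eg C = Qg C + C.red.card := rfl
    have hred : C.red.card = 0 := by omega
    have hQm : Qg C = m := by omega
    refine ⟨⟨minusSet C, by rw [minusSet_card, hQm]⟩, ?_⟩
    apply Subtype.ext
    show cfg0 (minusSet C) = C
    have hredE : C.red = ∅ := Finset.card_eq_zero.mp hred
    apply config_ext
    · simp [cfg0, hredE]
    · funext v
      have hnone : C.sign v ≠ none := by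
        rw [Ne, C.sign_none v, hredE]; simp
      show (if v ∈ minusSet C then some false else some true) = C.sign v
      match hv : C.sign v with
      | none => exact absurd hv hnone
      | some false => simp [minusSet, hv]
      | some true => simp [minusSet, hv]

noncomputable def Fmap (k e : ℤ) (hm : 1 ≤ m) (hk : (m : ℤ) - 1 = k) (he : (m : ℤ) = e)
    (p : {p : Fin n × Finset (Fin n) // p.1 ≠ 0 ∧ 0 ∉ p.2 ∧ p.1 ∉ p.2 ∧ p.2.card = m - 1}) :
    {C : Config (starGraph n) // (Qg C : ℤ) = k ∧ (Eg C : ℤ) = e} :=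
  ⟨cfg1 p.1.1 p.2.1 p.1.2,
    by rw [Qg_cfg1 p.2.1 p.2.2.1 p.2.2.2.1, p.2.2.2.2, ← hk]; push_cast; omega,
    by rw [Eg_cfg1 p.2.1 p.2.2.1 p.2.2.2.1, p.2.2.2.2, ← he]; push_cast; omega⟩

lemma Fmap_bij (k e : ℤ) (hm : 1 ≤ m) (hk : (m : ℤ) - 1 = k) (he : (m : ℤ) = e) :
    Function.Bijective (Fmap (n := n) (m := m) k e hm hk he) := by
  constructor
  · rintro ⟨⟨i, S⟩, hi, h0S, hiS, hS⟩ ⟨⟨j, T⟩, hj, h0T, hjT, hT⟩ h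
    have h2 : cfg1 i hi S = cfg1 j hj T := congrArg Subtype.val h
    have hredeq : ({s(0, i)} : Finset (Sym2 (Fin n))) = {s(0, j)} := congrArg Config.red h2
    have hij : i = j := by
      have := Finset.singleton_injective hredeq
      rw [Sym2.eq_iff] at this
      rcases this with ⟨-, h⟩ | ⟨h, -⟩
      · exact h
      · exact absurd h.symm hj
    subst hij
    have h3 : (cfg1 i hi S).sign = (cfg1 i hj T).sign := congrArg Config.sign h2
    have hST : S = T := by
      ext v
      have := congrFun h3 v
      simp only [cfg1] at this
      by_cases hv : v = 0 ∨ v = i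
      · rcases hv with rfl | rfl
        · simp [h0S, h0T]
        · simp [hiS, hjT]
      · rw [if_neg hv, if_neg hv] at this
        by_cases hvS : v ∈ S <;> by_cases hvT : v ∈ T <;> simp [hvS, hvT] at this ⊢
    subst hST
    rfl
  · rintro ⟨C, hQ, hE⟩
    have hEg : Eg C = Qg C + C.red.card := rfl
    have hred : C.red.card = 1 := by omega
    have hQm : Qg C = m - 1 := by omega
    obtain ⟨ed, hed⟩ := Finset.card_eq_one.mp hred
    obtain ⟨i, hi, hedi⟩ := star_edge (C.matching.1 ed (by rw [hed]; simp))
    have hS0 : (0 : Fin n) ∉ minusSet C := by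
      have : C.sign 0 = none := (C.sign_none 0).mpr ⟨ed, by rw [hed]; simp, by rw [hedi]; simp⟩
      simp [minusSet, this]
    have hSi : i ∉ minusSet C := by
      have : C.sign i = none := (C.sign_none i).mpr ⟨ed, by rw [hed]; simp, by rw [hedi]; simp⟩
      simp [minusSet, this]
    refine ⟨⟨⟨i, minusSet C⟩, hi, hS0, hSi, by rw [minusSet_card, hQm]⟩, ?_⟩
    apply Subtype.ext
    show cfg1 i hi (minusSet C) = C
    apply config_ext
    · show ({s(0, i)} : Finset (Sym2 (Fin n))) = C.red
      rw [hed, hedi]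
    · funext v
      show (if v = 0 ∨ v = i then none else if v ∈ minusSet C then some false else some true)
          = C.sign v
      by_cases hv : v = 0 ∨ v = i
      · rw [if_pos hv]
        exact ((C.sign_none v).mpr ⟨ed, by rw [hed]; simp, by rw [hedi, Sym2.mem_iff]; tauto⟩).symm
      · rw [if_neg hv]
        have hnone : C.sign v ≠ none := by
          rw [Ne, C.sign_none v, hed]
          push_neg at hv
          simp only [Finset.mem_singleton, exists_eq_left, hedi, Sym2.mem_iff]
          tauto
        match hvs : C.sign v with
        | none => exact absurd hvs hnone
        | some false => simp [minusSet, hvs]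
        | some true => simp [minusSet, hvs]

end Bij


section DChar
variable {n m : ℕ} [NeZero n]

lemma DStep_cfg1_cfg0 {i : Fin n} (hi : i ≠ 0) {S T : Finset (Fin n)}
    (h0S : 0 ∉ S) (hiS : i ∉ S) :
    DStep (cfg1 i hi S) (cfg0 T) ↔ (T = insert 0 S ∨ T = insert i S) := by
  constructor
  · rintro ⟨e, he, -, hsign, u, v, huv, hu, hv⟩
    rw [show (cfg1 i hi S).red = {s(0,i)} from rfl, Finset.mem_singleton] at he
    subst he
    have hmem : ∀ x : Fin n, ¬(x = 0 ∨ x = i) → ((x ∈ T) ↔ (x ∈ S)) := by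
      intro x hx
      have := hsign x (by rw [Sym2.mem_iff]; exact hx)
      show _
      by_cases hT : x ∈ T <;> by_cases hS : x ∈ S <;>
        simp [cfg0, cfg1, hT, hS, hx] at this ⊢
    rw [Sym2.eq_iff] at huv
    have sgn : ∀ x : Fin n, ((cfg0 T).sign x = some false ↔ x ∈ T)
        ∧ ((cfg0 T).sign x = some true ↔ x ∉ T) := by
      intro x
      by_cases hT : x ∈ T <;> simp [cfg0, hT]
    rcases huv with ⟨hu0, hvi⟩ | ⟨hui, hv0⟩
    · subst hu0; subst hvi
      right
      have h0T : 0 ∉ T := (sgn 0).2.mp hu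
      have hiT : i ∈ T := (sgn i).1.mp hv
      ext x
      rw [Finset.mem_insert]
      by_cases hx : x = 0 ∨ x = i
      · rcases hx with rfl | rfl
        · simp [h0T, Ne.symm hi, h0S]
        · simp [hiT]
      · push_neg at hx
        rw [hmem x (by push_neg; exact hx)]
        simp [hx.2]
    · subst hui; subst hv0
      left
      have h0T : 0 ∈ T := (sgn 0).1.mp hv
      have hiT : i ∉ T := (sgn i).2.mp hu
      ext x
      rw [Finset.mem_insert]
      by_cases hx : x = 0 ∨ x = i
      · rcases hx with rfl | rfl
        · simp [h0T]
        · simp [hiT, hi, hiS]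
      · push_neg at hx
        rw [hmem x (by push_neg; exact hx)]
        simp [hx.1]
  · intro hT
    refine ⟨s(0, i), by rw [show (cfg1 i hi S).red = {s(0,i)} from rfl]; simp,
      by rw [show (cfg1 i hi S).red = {s(0,i)} from rfl]; simp [Finset.erase_singleton]; rfl,
      ?_, ?_⟩
    · intro x hx
      rw [Sym2.mem_iff] at hx
      show (if x ∈ T then some false else some true)
          = (if x = 0 ∨ x = i then none else if x ∈ S then some false else some true)
      rw [if_neg hx]
      push_neg at hx
      have : x ∈ T ↔ x ∈ S := by
        rcases hT with rfl | rfl <;> simp [Finset.mem_insert, hx.1, hx.2]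
      by_cases hS : x ∈ S
      · rw [if_pos (this.mpr hS), if_pos hS]
      · rw [if_neg (fun c => hS (this.mp c)), if_neg hS]
    · rcases hT with rfl | rfl
      · exact ⟨i, 0, Sym2.eq_swap, by
          show (if i ∈ insert 0 S then some false else some true) = some true
          rw [if_neg (by simp [hi, hiS])], by
          show (if (0:Fin n) ∈ insert 0 S then some false else some true) = some false
          rw [if_pos (Finset.mem_insert_self 0 S)]⟩
      · exact ⟨0, i, rfl, by
          show (if (0:Fin n) ∈ insert i S then some false else some true) = some true
          rw [if_neg (by simp [Ne.symm hi, h0S])], by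
          show (if i ∈ insert i S then some false else some true) = some false
          rw [if_pos (Finset.mem_insert_self i S)]⟩

end DChar


section Rel
variable (n m : ℕ) [NeZero n]

abbrev Q1 : Type := {S : Finset (Fin n) // S.card = m}
abbrev P1 : Type := {p : Fin n × Finset (Fin n) // p.1 ≠ 0 ∧ 0 ∉ p.2 ∧ p.1 ∉ p.2 ∧ p.2.card = m - 1}

def rel' (p : P1 n m) (q : Q1 n m) : Prop :=
  q.1 = insert 0 p.1.2 ∨ q.1 = insert p.1.1 p.1.2

variable {n m}

lemma mem_of_chain {ι : Type} {W : Submodule (ZMod 2) (ι → ZMod 2)} {x y z : ι → ZMod 2}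
    (h1 : x + y ∈ W) (h2 : y + z ∈ W) : x + z ∈ W := by
  have hy : y + y = 0 := funext fun t => CharTwo.add_self_eq_zero _
  have hxz : x + z = (x + y) + (y + z) := by
    rw [show (x + y) + (y + z) = (y + y) + (x + z) by abel, hy, zero_add]
  rw [hxz]
  exact Submodule.add_mem W h1 h2

lemma insert_ne_insert {i : Fin n} {S : Finset (Fin n)} (hi : i ≠ 0) (hiS : i ∉ S) :
    insert (0 : Fin n) S ≠ insert i S := fun h => by
  have : i ∈ insert (0 : Fin n) S := h ▸ Finset.mem_insert_self i S
  rcases Finset.mem_insert.mp this with h' | h'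
  · exact hi h'
  · exact hiS h'

lemma gen_mem {i : Fin n} {S : Finset (Fin n)} (hi : i ≠ 0) (h0S : 0 ∉ S) (hiS : i ∉ S)
    (hS : S.card = m - 1) (q q' : Q1 n m) (hq : q.1 = insert 0 S) (hq' : q'.1 = insert i S) :
    ind q + ind q' ∈ LinearMap.range (sumLin (rel' n m)) := by
  refine ⟨ind (⟨(i, S), hi, h0S, hiS, hS⟩ : P1 n m), ?_⟩
  rw [sumLin_ind]
  funext t
  have hiff : rel' n m ⟨(i, S), hi, h0S, hiS, hS⟩ t ↔ (t = q ∨ t = q') := by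
    unfold rel'
    rw [← hq, ← hq', ← Subtype.ext_iff, ← Subtype.ext_iff]
  have hqq' : q ≠ q' := fun h => insert_ne_insert hi hiS (by rw [← hq, ← hq', h])
  show (if rel' n m ⟨(i, S), hi, h0S, hiS, hS⟩ t then (1 : ZMod 2) else 0) = ind q t + ind q' t
  unfold ind
  by_cases ht : t = q
  · rw [if_pos (hiff.mpr (Or.inl ht)), if_pos ht, if_neg (ht ▸ hqq'), add_zero]
  · by_cases ht' : t = q'
    · rw [if_pos (hiff.mpr (Or.inr ht')), if_neg ht, if_pos ht', zero_add]
    · rw [if_neg (fun c => by rcases hiff.mp c with h | h; exacts [ht h, ht' h]),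
        if_neg ht, if_neg ht', add_zero]

end Rel


section Conn
variable {n m : ℕ} [NeZero n]

lemma pair_self (A : Finset (Fin n)) (hA hB : A.card = m) :
    ind (⟨A, hA⟩ : Q1 n m) + ind ⟨A, hB⟩ ∈ LinearMap.range (sumLin (rel' n m)) := by
  have h1 : (⟨A, hA⟩ : Q1 n m) = ⟨A, hB⟩ := Subtype.ext rfl
  have h0 : ind (⟨A, hB⟩ : Q1 n m) + ind ⟨A, hB⟩ = 0 :=
    funext fun t => CharTwo.add_self_eq_zero _
  rw [h1, h0]
  exact zero_mem _

lemma pair_mem (N : ℕ) : ∀ (A B : Finset (Fin n)) (hA : A.card = m) (hB : B.card = m),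
    (A \ B).card + (B \ A).card + (if (0:Fin n) ∈ A ∧ (0:Fin n) ∈ B then 1 else 0)
      + (if (0:Fin n) ∉ A ∧ (0:Fin n) ∉ B then 2 else 0) ≤ N →
    ind (⟨A, hA⟩ : Q1 n m) + ind ⟨B, hB⟩ ∈ LinearMap.range (sumLin (rel' n m)) := by
  induction N with
  | zero =>
    intro A B hA hB hμ
    have h1 : (A \ B).card = 0 := by omega
    have h2 : A = B := by
      apply Finset.eq_of_subset_of_card_le _ (le_of_eq (hB.trans hA.symm))
      intro x hx
      by_contra hxB
      have : x ∈ A \ B := Finset.mem_sdiff.mpr ⟨hx, hxB⟩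
      rw [Finset.card_eq_zero.mp h1] at this
      exact absurd this (Finset.notMem_empty x)
    subst h2
    exact pair_self A hA hB
  | succ N IH =>
    intro A B hA hB hμ
    by_cases hAB : A = B
    · subst hAB; exact pair_self A hA hB
    have hBA : (B \ A).Nonempty := by
      rw [Finset.sdiff_nonempty]
      intro hsub
      exact hAB (Finset.eq_of_subset_of_card_le hsub (le_of_eq (hA.trans hB.symm))).symm
    have hABne : (A \ B).Nonempty := by
      rw [Finset.sdiff_nonempty]
      intro hsub
      exact hAB (Finset.eq_of_subset_of_card_le hsub (le_of_eq (hB.trans hA.symm)))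
    by_cases h0A : (0:Fin n) ∈ A <;> by_cases h0B : (0:Fin n) ∈ B
    · -- case (i): 0 ∈ A, 0 ∈ B
      obtain ⟨i, hiBA⟩ := hBA
      have hiB : i ∈ B := (Finset.mem_sdiff.mp hiBA).1
      have hiA : i ∉ A := (Finset.mem_sdiff.mp hiBA).2
      have hi0 : i ≠ 0 := fun h => hiA (by rw [h]; exact h0A)
      have h0S : (0:Fin n) ∉ A.erase 0 := Finset.notMem_erase _ _
      have hiS : i ∉ A.erase 0 := fun h => hiA (Finset.mem_of_mem_erase h)
      have hm1 : 1 ≤ m := hA ▸ Finset.card_pos.mpr ⟨0, h0A⟩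
      have hScard : (A.erase 0).card = m - 1 := by
        rw [Finset.card_erase_of_mem h0A, hA]
      have hA0 : A = insert 0 (A.erase 0) := (Finset.insert_erase h0A).symm
      have hA'card : (insert i (A.erase 0)).card = m := by
        rw [Finset.card_insert_of_notMem hiS, hScard]; omega
      have hedge : ind (⟨A, hA⟩ : Q1 n m) + ind ⟨insert i (A.erase 0), hA'card⟩
          ∈ LinearMap.range (sumLin (rel' n m)) :=
        gen_mem hi0 h0S hiS hScard _ _ hA0 rfl
      have hd1 : insert i (A.erase 0) \ B = A \ B := by
        ext x
        simp only [Finset.mem_sdiff, Finset.mem_insert, Finset.mem_erase]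
        constructor
        · rintro ⟨h1 | ⟨h2, h3⟩, h4⟩
          · exact absurd (h1 ▸ hiB) h4
          · exact ⟨h3, h4⟩
        · rintro ⟨h1, h2⟩
          exact ⟨Or.inr ⟨fun h => h2 (by rw [h] at h1 ⊢; exact h0B), h1⟩, h2⟩
      have hd2 : B \ insert i (A.erase 0) = insert 0 ((B \ A).erase i) := by
        ext x
        simp only [Finset.mem_sdiff, Finset.mem_insert, Finset.mem_erase]
        constructor
        · rintro ⟨hxB, hn⟩
          push_neg at hn
          rcases Classical.em (x = 0) with h | h
          · exact Or.inl h
          · exact Or.inr ⟨hn.1, hxB, fun hxA => (hn.2 h hxA)⟩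
        · rintro (rfl | ⟨hxi, hxB, hxA⟩)
          · refine ⟨h0B, ?_⟩
            push_neg
            exact ⟨Ne.symm hi0, fun h => absurd rfl h⟩
          · exact ⟨hxB, by push_neg; exact ⟨hxi, fun _ => hxA⟩⟩
      have h0er : (0:Fin n) ∉ (B \ A).erase i :=
        fun h => (Finset.mem_sdiff.mp (Finset.mem_of_mem_erase h)).2 h0A
      have hpos : 0 < (B \ A).card := Finset.card_pos.mpr ⟨i, hiBA⟩
      have hc2 : (B \ insert i (A.erase 0)).card = (B \ A).card := by
        rw [hd2, Finset.card_insert_of_notMem h0er, Finset.card_erase_of_mem hiBA]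
        omega
      have h0A' : (0:Fin n) ∉ insert i (A.erase 0) := by
        rw [Finset.mem_insert]
        push_neg
        exact ⟨Ne.symm hi0, h0S⟩
      rw [if_pos ⟨h0A, h0B⟩, if_neg (fun c => c.1 h0A)] at hμ
      refine mem_of_chain hedge (IH _ B hA'card hB ?_)
      rw [hd1, hc2, if_neg (fun c => h0A' c.1), if_neg (fun c => c.2 h0B)]
      omega
    · -- case (ii): 0 ∈ A, 0 ∉ B
      obtain ⟨i, hiBA⟩ := hBA
      have hiB : i ∈ B := (Finset.mem_sdiff.mp hiBA).1
      have hiA : i ∉ A := (Finset.mem_sdiff.mp hiBA).2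
      have hi0 : i ≠ 0 := fun h => h0B (by rw [← h]; exact hiB)
      have h0S : (0:Fin n) ∉ B.erase i := fun h => h0B (Finset.mem_of_mem_erase h)
      have hiS : i ∉ B.erase i := Finset.notMem_erase _ _
      have hm1 : 1 ≤ m := hB ▸ Finset.card_pos.mpr ⟨i, hiB⟩
      have hScard : (B.erase i).card = m - 1 := by
        rw [Finset.card_erase_of_mem hiB, hB]
      have hBi : B = insert i (B.erase i) := (Finset.insert_erase hiB).symm
      have hB'card : (insert 0 (B.erase i)).card = m := by
        rw [Finset.card_insert_of_notMem h0S, hScard]; omega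
      have hedge : ind (⟨insert 0 (B.erase i), hB'card⟩ : Q1 n m) + ind ⟨B, hB⟩
          ∈ LinearMap.range (sumLin (rel' n m)) :=
        gen_mem hi0 h0S hiS hScard _ _ rfl hBi
      have hd1 : A \ insert 0 (B.erase i) = (A \ B).erase 0 := by
        ext x
        simp only [Finset.mem_sdiff, Finset.mem_insert, Finset.mem_erase]
        constructor
        · rintro ⟨hxA, hn⟩
          push_neg at hn
          refine ⟨hn.1, hxA, fun hxB => ?_⟩
          have hxi : x ≠ i := fun h => hiA (by rw [← h]; exact hxA)
          exact (hn.2 hxi hxB)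
        · rintro ⟨hx0, hxA, hxB⟩
          refine ⟨hxA, ?_⟩
          push_neg
          exact ⟨hx0, fun _ h => hxB h⟩
      have hd2 : insert 0 (B.erase i) \ A = (B \ A).erase i := by
        ext x
        simp only [Finset.mem_sdiff, Finset.mem_insert, Finset.mem_erase]
        constructor
        · rintro ⟨rfl | ⟨hxi, hxB⟩, hxA⟩
          · exact absurd h0A hxA
          · exact ⟨hxi, hxB, hxA⟩
        · rintro ⟨hxi, hxB, hxA⟩
          exact ⟨Or.inr ⟨hxi, hxB⟩, hxA⟩
      have h0AB : (0:Fin n) ∈ A \ B := Finset.mem_sdiff.mpr ⟨h0A, h0B⟩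
      have hc1 : (A \ insert 0 (B.erase i)).card = (A \ B).card - 1 := by
        rw [hd1, Finset.card_erase_of_mem h0AB]
      have hc2 : (insert 0 (B.erase i) \ A).card = (B \ A).card - 1 := by
        rw [hd2, Finset.card_erase_of_mem hiBA]
      have hpos1 : 0 < (A \ B).card := Finset.card_pos.mpr ⟨0, h0AB⟩
      have hpos2 : 0 < (B \ A).card := Finset.card_pos.mpr ⟨i, hiBA⟩
      rw [if_neg (fun c => h0B c.2), if_neg (fun c => c.1 h0A)] at hμ
      refine mem_of_chain (IH A _ hA hB'card ?_) hedge
      rw [hc1, hc2, if_pos ⟨h0A, Finset.mem_insert_self 0 _⟩,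
        if_neg (fun c => c.1 h0A)]
      omega
    · -- case (iii): 0 ∉ A, 0 ∈ B
      obtain ⟨i, hiAB⟩ := hABne
      have hiA : i ∈ A := (Finset.mem_sdiff.mp hiAB).1
      have hiB : i ∉ B := (Finset.mem_sdiff.mp hiAB).2
      have hi0 : i ≠ 0 := fun h => h0A (by rw [← h]; exact hiA)
      have h0S : (0:Fin n) ∉ A.erase i := fun h => h0A (Finset.mem_of_mem_erase h)
      have hiS : i ∉ A.erase i := Finset.notMem_erase _ _
      have hm1 : 1 ≤ m := hA ▸ Finset.card_pos.mpr ⟨i, hiA⟩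
      have hScard : (A.erase i).card = m - 1 := by
        rw [Finset.card_erase_of_mem hiA, hA]
      have hAi : A = insert i (A.erase i) := (Finset.insert_erase hiA).symm
      have hA'card : (insert 0 (A.erase i)).card = m := by
        rw [Finset.card_insert_of_notMem h0S, hScard]; omega
      have hedge : ind (⟨insert 0 (A.erase i), hA'card⟩ : Q1 n m) + ind ⟨A, hA⟩
          ∈ LinearMap.range (sumLin (rel' n m)) :=
        gen_mem hi0 h0S hiS hScard _ _ rfl hAi
      have hd1 : insert 0 (A.erase i) \ B = (A \ B).erase i := by
        ext x
        simp only [Finset.mem_sdiff, Finset.mem_insert, Finset.mem_erase]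
        constructor
        · rintro ⟨rfl | ⟨hxi, hxA⟩, hxB⟩
          · exact absurd h0B hxB
          · exact ⟨hxi, hxA, hxB⟩
        · rintro ⟨hxi, hxA, hxB⟩
          exact ⟨Or.inr ⟨hxi, hxA⟩, hxB⟩
      have hd2 : B \ insert 0 (A.erase i) = (B \ A).erase 0 := by
        ext x
        simp only [Finset.mem_sdiff, Finset.mem_insert, Finset.mem_erase]
        constructor
        · rintro ⟨hxB, hn⟩
          push_neg at hn
          refine ⟨hn.1, hxB, fun hxA => ?_⟩
          have hxi : x ≠ i := fun h => hiB (by rw [← h]; exact hxB)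
          exact (hn.2 hxi hxA)
        · rintro ⟨hx0, hxB, hxA⟩
          refine ⟨hxB, ?_⟩
          push_neg
          exact ⟨hx0, fun _ h => hxA h⟩
      have h0BA : (0:Fin n) ∈ B \ A := Finset.mem_sdiff.mpr ⟨h0B, h0A⟩
      have hc1 : (insert 0 (A.erase i) \ B).card = (A \ B).card - 1 := by
        rw [hd1, Finset.card_erase_of_mem hiAB]
      have hc2 : (B \ insert 0 (A.erase i)).card = (B \ A).card - 1 := by
        rw [hd2, Finset.card_erase_of_mem h0BA]
      have hpos1 : 0 < (A \ B).card := Finset.card_pos.mpr ⟨i, hiAB⟩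
      have hpos2 : 0 < (B \ A).card := Finset.card_pos.mpr ⟨0, h0BA⟩
      rw [if_neg (fun c => h0A c.1), if_neg (fun c => c.2 h0B)] at hμ
      refine mem_of_chain (by rwa [add_comm] at hedge : ind (⟨A, hA⟩ : Q1 n m) + _ ∈ _)
        (IH _ B hA'card hB ?_)
      rw [hc1, hc2, if_pos ⟨Finset.mem_insert_self 0 _, h0B⟩,
        if_neg (fun c => c.2 h0B)]
      omega
    · -- case (iv): 0 ∉ A, 0 ∉ B
      obtain ⟨i, hiAB⟩ := hABne
      have hiA : i ∈ A := (Finset.mem_sdiff.mp hiAB).1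
      have hiB : i ∉ B := (Finset.mem_sdiff.mp hiAB).2
      have hi0 : i ≠ 0 := fun h => h0A (by rw [← h]; exact hiA)
      have h0S : (0:Fin n) ∉ A.erase i := fun h => h0A (Finset.mem_of_mem_erase h)
      have hiS : i ∉ A.erase i := Finset.notMem_erase _ _
      have hm1 : 1 ≤ m := hA ▸ Finset.card_pos.mpr ⟨i, hiA⟩
      have hScard : (A.erase i).card = m - 1 := by
        rw [Finset.card_erase_of_mem hiA, hA]
      have hAi : A = insert i (A.erase i) := (Finset.insert_erase hiA).symm
      have hA'card : (insert 0 (A.erase i)).card = m := by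
        rw [Finset.card_insert_of_notMem h0S, hScard]; omega
      have hedge : ind (⟨insert 0 (A.erase i), hA'card⟩ : Q1 n m) + ind ⟨A, hA⟩
          ∈ LinearMap.range (sumLin (rel' n m)) :=
        gen_mem hi0 h0S hiS hScard _ _ rfl hAi
      have hd1 : insert 0 (A.erase i) \ B = insert 0 ((A \ B).erase i) := by
        ext x
        simp only [Finset.mem_sdiff, Finset.mem_insert, Finset.mem_erase]
        constructor
        · rintro ⟨rfl | ⟨hxi, hxA⟩, hxB⟩
          · exact Or.inl rfl
          · exact Or.inr ⟨hxi, hxA, hxB⟩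
        · rintro (rfl | ⟨hxi, hxA, hxB⟩)
          · exact ⟨Or.inl rfl, h0B⟩
          · exact ⟨Or.inr ⟨hxi, hxA⟩, hxB⟩
      have hd2 : B \ insert 0 (A.erase i) = B \ A := by
        ext x
        simp only [Finset.mem_sdiff, Finset.mem_insert, Finset.mem_erase]
        constructor
        · rintro ⟨hxB, hn⟩
          push_neg at hn
          refine ⟨hxB, fun hxA => ?_⟩
          have hxi : x ≠ i := fun h => hiB (by rw [← h]; exact hxB)
          exact (hn.2 hxi hxA)
        · rintro ⟨hxB, hxA⟩
          refine ⟨hxB, ?_⟩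
          push_neg
          exact ⟨fun h => h0B (by rw [← h]; exact hxB), fun _ h => hxA h⟩
      have h0er : (0:Fin n) ∉ (A \ B).erase i :=
        fun h => h0A (Finset.mem_sdiff.mp (Finset.mem_of_mem_erase h)).1
      have hc1 : (insert 0 (A.erase i) \ B).card = (A \ B).card := by
        rw [hd1, Finset.card_insert_of_notMem h0er, Finset.card_erase_of_mem hiAB]
        have : 0 < (A \ B).card := Finset.card_pos.mpr ⟨i, hiAB⟩
        omega
      rw [if_neg (fun c => h0A c.1), if_pos ⟨h0A, h0B⟩] at hμ
      refine mem_of_chain (by rwa [add_comm] at hedge : ind (⟨A, hA⟩ : Q1 n m) + _ ∈ _)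
        (IH _ B hA'card hB ?_)
      rw [hc1, hd2, if_neg (fun c => h0B c.2), if_neg (fun c => c.1 (Finset.mem_insert_self 0 _))]
      omega

end Conn


section Range
variable {n m : ℕ} [NeZero n]

lemma range_eq_ker_eps (hm : 1 ≤ m) (hmn : m ≤ n) :
    LinearMap.range (sumLin (rel' n m)) = LinearMap.ker (eps (ι := Q1 n m)) := by
  apply le_antisymm
  · rintro x ⟨f, rfl⟩
    rw [LinearMap.mem_ker]
    show (∑ q : Q1 n m, ∑ p : P1 n m, if rel' n m p q then f p else 0) = 0
    rw [Finset.sum_comm]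
    apply Finset.sum_eq_zero
    intro p _
    rcases p with ⟨⟨i, S⟩, hi, h0S, hiS, hS⟩
    have hq0 : (insert (0:Fin n) S).card = m := by
      rw [Finset.card_insert_of_notMem h0S, hS]; omega
    have hqi : (insert i S).card = m := by
      rw [Finset.card_insert_of_notMem hiS, hS]; omega
    have hne : (⟨insert 0 S, hq0⟩ : Q1 n m) ≠ ⟨insert i S, hqi⟩ :=
      fun h => insert_ne_insert hi hiS (congrArg Subtype.val h)
    have hfil : Finset.univ.filter (fun q : Q1 n m => rel' n m ⟨(i, S), hi, h0S, hiS, hS⟩ q)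
        = {⟨insert 0 S, hq0⟩, ⟨insert i S, hqi⟩} := by
      ext q
      simp only [Finset.mem_filter, Finset.mem_univ, true_and, Finset.mem_insert,
        Finset.mem_singleton]
      unfold rel'
      rw [Subtype.ext_iff, Subtype.ext_iff]
    calc (∑ q : Q1 n m, if rel' n m ⟨(i, S), hi, h0S, hiS, hS⟩ q
            then f ⟨(i, S), hi, h0S, hiS, hS⟩ else 0)
        = ∑ q ∈ Finset.univ.filter (fun q : Q1 n m => rel' n m ⟨(i, S), hi, h0S, hiS, hS⟩ q),
            f ⟨(i, S), hi, h0S, hiS, hS⟩ := (Finset.sum_filter _ _).symm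
      _ = 0 := by
          rw [hfil, Finset.sum_pair hne]
          exact CharTwo.add_self_eq_zero _
  · intro h hh
    rw [LinearMap.mem_ker] at hh
    have hh' : (∑ q : Q1 n m, h q) = 0 := hh
    have hQne : Nonempty (Q1 n m) := by
      obtain ⟨T, -, hT⟩ := Finset.exists_subset_card_eq
        (show m ≤ (Finset.univ : Finset (Fin n)).card from by
          rw [Finset.card_univ, Fintype.card_fin]
          exact hmn)
      exact ⟨⟨T, hT⟩⟩
    obtain ⟨q₀⟩ := hQne
    have hrep : h = ∑ q : Q1 n m, h q • (ind q + ind q₀) := by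
      funext t
      rw [Finset.sum_apply]
      simp only [Pi.add_apply, Pi.smul_apply, smul_eq_mul, mul_add]
      rw [Finset.sum_add_distrib]
      have e1 : (∑ q : Q1 n m, h q * ind q t) = h t := by
        have key : ∀ q : Q1 n m, h q * ind q t = if t = q then h q else 0 := by
          intro q; unfold ind; by_cases hq : t = q <;> simp [hq]
        rw [Finset.sum_congr rfl fun q _ => key q, Finset.sum_ite_eq]
        simp
      have e2 : (∑ q : Q1 n m, h q * ind q₀ t) = 0 := by
        rw [← Finset.sum_mul, hh', zero_mul]
      rw [e1, e2, add_zero]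
    rw [hrep]
    apply Submodule.sum_mem
    intro q _
    apply Submodule.smul_mem
    exact pair_mem _ q.1 q₀.1 q.2 q₀.2 le_rfl

lemma card_Q1 : Fintype.card (Q1 n m) = Nat.choose n m := by
  rw [Fintype.card_finset_len, Fintype.card_fin]

lemma finrank_range_rel' (hm : 1 ≤ m) (hmn : m ≤ n) :
    Module.finrank (ZMod 2) (LinearMap.range (sumLin (rel' n m))) = Nat.choose n m - 1 := by
  have hQne : Nonempty (Q1 n m) := by
    obtain ⟨T, -, hT⟩ := Finset.exists_subset_card_eq
      (show m ≤ (Finset.univ : Finset (Fin n)).card from by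
        rw [Finset.card_univ, Fintype.card_fin]; exact hmn)
    exact ⟨⟨T, hT⟩⟩
  rw [range_eq_ker_eps hm hmn, finrank_ker_eps, card_Q1]

lemma card_P1 : Fintype.card (P1 n m) = (n - 1) * Nat.choose (n - 2) (m - 1) := by
  let e : P1 n m ≃ Σ i : {i : Fin n // i ≠ 0},
      {S : Finset (Fin n) // 0 ∉ S ∧ i.1 ∉ S ∧ S.card = m - 1} :=
    { toFun := fun p => ⟨⟨p.1.1, p.2.1⟩, ⟨p.1.2, p.2.2.1, p.2.2.2.1, p.2.2.2.2⟩⟩,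
      invFun := fun x => ⟨(x.1.1, x.2.1), x.1.2, x.2.2.1, x.2.2.2.1, x.2.2.2.2⟩,
      left_inv := fun _ => rfl,
      right_inv := fun _ => rfl }
  rw [Fintype.card_congr e, Fintype.card_sigma]
  have hinner : ∀ i : {i : Fin n // i ≠ 0},
      Fintype.card {S : Finset (Fin n) // 0 ∉ S ∧ i.1 ∉ S ∧ S.card = m - 1}
        = Nat.choose (n - 2) (m - 1) := by
    intro i
    rw [Fintype.card_subtype]
    have hfil : Finset.univ.filter (fun S : Finset (Fin n) => 0 ∉ S ∧ i.1 ∉ S ∧ S.card = m - 1)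
        = Finset.powersetCard (m - 1) ((Finset.univ.erase 0).erase i.1) := by
      ext S
      simp only [Finset.mem_filter, Finset.mem_univ, true_and, Finset.mem_powersetCard]
      constructor
      · rintro ⟨h0, hi, hc⟩
        refine ⟨fun x hx => ?_, hc⟩
        rw [Finset.mem_erase, Finset.mem_erase]
        exact ⟨fun h => hi (by rw [← h]; exact hx), fun h => h0 (by rw [← h]; exact hx),
          Finset.mem_univ x⟩
      · rintro ⟨hsub, hc⟩
        refine ⟨fun h => ?_, fun h => ?_, hc⟩
        · have := hsub h
          rw [Finset.mem_erase, Finset.mem_erase] at this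
          exact this.2.1 rfl
        · have := hsub h
          rw [Finset.mem_erase, Finset.mem_erase] at this
          exact this.1 rfl
    rw [hfil, Finset.card_powersetCard]
    congr 1
    rw [Finset.card_erase_of_mem (by rw [Finset.mem_erase]; exact ⟨i.2, Finset.mem_univ _⟩),
      Finset.card_erase_of_mem (Finset.mem_univ 0), Finset.card_univ, Fintype.card_fin]
    omega
  rw [Finset.sum_congr rfl (fun i _ => hinner i), Finset.sum_const, smul_eq_mul]
  congr 1
  rw [Finset.card_univ, Fintype.card_subtype_compl, Fintype.card_fin, Fintype.card_subtype_eq]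

end Range


/-- the first-level Seifert cohomology of the star `S_n`: for
`2 ≤ m ≤ n - 2`, `dim SH^{m-1}(S_n, m) = (n-1)·C(n-2, m-1) - C(n, m) + 1`. -/
theorem SHdim_starGraph (n : ℕ) (hn : 4 ≤ n) (m : ℕ) (hm : 2 ≤ m) (hm' : m ≤ n - 2) :
    (SHdim (starGraph n) ((m : ℤ) - 1) (m : ℤ) : ℤ) =
      ((n : ℤ) - 1) * (Nat.choose (n - 2) (m - 1) : ℤ) - (Nat.choose n m : ℤ) + 1 := by
  haveI : NeZero n := ⟨by omega⟩
  have hmn : m ≤ n := by omega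
  have hm1 : 1 ≤ m := by omega
  unfold SHdim cohDim
  set f := Dgr (starGraph n) ((m : ℤ) - 1 - 1) (m : ℤ) ((m : ℤ) - 1) (m : ℤ) with hf
  set g := Dgr (starGraph n) ((m : ℤ) - 1) (m : ℤ) ((m : ℤ) - 1 + 1) (m : ℤ) with hg
  have hempty : IsEmpty
      {C : Config (starGraph n) // (Qg C : ℤ) = (m : ℤ) - 1 - 1 ∧ (Eg C : ℤ) = (m : ℤ)} := by
    constructor
    rintro ⟨C, hQ, hE⟩
    have hEg : Eg C = Qg C + C.red.card := rfl
    have h2 : C.red.card ≤ 1 := matching_card_le_one C.matching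
    omega
  have hzero : ∀ x : SC (starGraph n) ((m : ℤ) - 1 - 1) (m : ℤ), x = 0 :=
    fun x => funext fun c => (hempty.elim c)
  have hrangef : LinearMap.range f = ⊥ := by
    rw [LinearMap.range_eq_bot]
    exact LinearMap.ext fun x => by rw [hzero x]; simp
  have hbot : (LinearMap.range f).comap (LinearMap.ker g).subtype = ⊥ := by
    rw [hrangef, Submodule.comap_bot, Submodule.ker_subtype]
  have e0 : Module.finrank (ZMod 2)
        ((LinearMap.ker g) ⧸ (LinearMap.range f).comap (LinearMap.ker g).subtype)
      = Module.finrank (ZMod 2) (LinearMap.ker g) :=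
    LinearEquiv.finrank_eq (Submodule.quotEquivOfEqBot _ hbot)
  rw [e0]
  have hFbij := Fmap_bij (n := n) (m := m) ((m : ℤ) - 1) (m : ℤ) hm1 rfl rfl
  have hGbij := Gmap_bij (n := n) (m := m) ((m : ℤ) - 1 + 1) (m : ℤ) (by ring) rfl
  have hrn := LinearMap.finrank_range_add_finrank_ker g
  rw [Module.finrank_fintype_fun_eq_card] at hrn
  have hcard1 : Fintype.card
      {C : Config (starGraph n) // (Qg C : ℤ) = (m : ℤ) - 1 ∧ (Eg C : ℤ) = (m : ℤ)}
        = (n - 1) * Nat.choose (n - 2) (m - 1) := by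
    rw [← Fintype.card_of_bijective hFbij, card_P1]
  have hgdef : g = sumLin (fun
      (C : {C : Config (starGraph n) // (Qg C : ℤ) = (m : ℤ) - 1 ∧ (Eg C : ℤ) = (m : ℤ)})
      (C' : {C : Config (starGraph n) //
        (Qg C : ℤ) = (m : ℤ) - 1 + 1 ∧ (Eg C : ℤ) = (m : ℤ)}) => DStep C.1 C'.1) := rfl
  have hrange : Module.finrank (ZMod 2) (LinearMap.range g) = Nat.choose n m - 1 := by
    rw [hgdef, sumLin_conj _ (rel' n m) (Equiv.ofBijective _ hFbij) (Equiv.ofBijective _ hGbij)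
      (fun p q => DStep_cfg1_cfg0 p.2.1 p.2.2.1 p.2.2.2.1)]
    exact finrank_range_rel' hm1 hmn
  have hC1 : 1 ≤ Nat.choose n m := Nat.choose_pos hmn
  have hcast : (((n - 1) * Nat.choose (n - 2) (m - 1) : ℕ) : ℤ)
      = ((n : ℤ) - 1) * (Nat.choose (n - 2) (m - 1) : ℤ) := by
    push_cast [Nat.cast_sub (show 1 ≤ n by omega)]
    ring
  rw [← hcast]
  omega


end Seifert
end
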